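/- Let A be a commutative ring, and let φ: C• → D• be a morphism of bounded-above chain complexes of projective A-modules. If for every maximal ideal m of A the induced morphism C• ⊗_A A/m → D• ⊗_A A/m is a quasi-isomorphism, then φ is a quasi-isomorphism, provided additionally that A is Noetherian and all homology modules of the mapping cone of φ are finitely generated. -/

import Mathlib

/-!
Let `K` be the mapping cone of `φ`: a bounded above complex of finite projective modules, which
is acyclic iff `φ` is a quasi-isomorphism, and whose reduction `K ⊗ A/m` is the cone of
`φ ⊗ A/m`, hence acyclic. By descending induction on `n`, the image of `d : Kⁿ → Kⁿ⁺¹` is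
projective. Then `ker d` is a direct summand of `Kⁿ`: it is finite and stays a submodule after
tensoring with `A/m`, so exactness of `K ⊗ A/m` makes `Kⁿ⁻¹ → ker d` surjective modulo every
maximal ideal, hence surjective by Nakayama. This is exactness of `K` at `n`, and it identifies
the image of `Kⁿ⁻¹ → Kⁿ` with the projective module `ker d`.
-/

open CategoryTheory CategoryTheory.Limits

open scoped TensorProduct

universe u

section Ring

variable {R M N : Type*} [Ring R] [AddCommGroup M] [Module R M] [AddCommGroup N] [Module R N]

open LinearMap

theorem LinearMap.exists_leftInverse_ker_subtype (f : M →ₗ[R] N)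
    [Module.Projective R (range f)] :
    ∃ r : M →ₗ[R] ker f, r ∘ₗ (ker f).subtype = LinearMap.id := by
  obtain ⟨s, hs⟩ := Module.projective_lifting_property f.rangeRestrict LinearMap.id
    f.surjective_rangeRestrict
  have hexact : Function.Exact (ker f).subtype f.rangeRestrict :=
    exact_iff.mpr (by rw [ker_rangeRestrict, Submodule.range_subtype])
  exact ((hexact.split_tfae (ker f).injective_subtype f.surjective_rangeRestrict).out 0 1).mp
    (⟨s, hs⟩ : ∃ l, _ = _)

theorem Module.Projective.ker_of_projective_range [Module.Projective R M] (f : M →ₗ[R] N)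
    [Module.Projective R (range f)] : Module.Projective R (ker f) :=
  let ⟨r, hr⟩ := f.exists_leftInverse_ker_subtype
  .of_split _ r hr

end Ring

section CommRing

variable {A : Type*} [CommRing A] {M₀ M₁ M₂ : Type*} [AddCommGroup M₀] [Module A M₀]
  [AddCommGroup M₁] [Module A M₁] [AddCommGroup M₂] [Module A M₂]

open LinearMap

theorem Module.subsingleton_of_forall_isMaximal_subsingleton_tensor_quotient
    [Module.Finite A M₀] (h : ∀ m : Ideal A, m.IsMaximal → Subsingleton (M₀ ⊗[A] (A ⧸ m))) :
    Subsingleton M₀ := by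
  rw [← Module.annihilator_eq_top_iff (R := A)]
  by_contra hne
  obtain ⟨m, hm, hle⟩ := Ideal.exists_le_maximal _ hne
  have hsmul : (⊤ : Submodule A M₀) ≤ m • ⊤ :=
    (Submodule.Quotient.subsingleton_iff.mp
      ((TensorProduct.tensorQuotEquivQuotSMul M₀ m).subsingleton_congr.mp (h m hm))).ge
  obtain ⟨r, hr1, hr0⟩ := Submodule.exists_sub_one_mem_and_smul_eq_zero_of_fg_of_le_smul m ⊤
    Module.Finite.fg_top hsmul
  have hr : r ∈ m := hle (Module.mem_annihilator.mpr fun x => hr0 x trivial)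
  exact hm.ne_top (m.eq_top_iff_one.mpr (by simpa using m.sub_mem hr hr1))

theorem LinearMap.surjective_of_forall_isMaximal_surjective_rTensor [Module.Finite A M₁]
    (f : M₀ →ₗ[A] M₁)
    (h : ∀ m : Ideal A, m.IsMaximal → Function.Surjective (f.rTensor (A ⧸ m))) :
    Function.Surjective f := by
  rw [← range_eq_top, ← Submodule.Quotient.subsingleton_iff]
  refine Module.subsingleton_of_forall_isMaximal_subsingleton_tensor_quotient (A := A)
    fun m hm => subsingleton_of_forall_eq 0 fun x => ?_
  have hexact := rTensor_exact (A ⧸ m) (exact_map_mkQ_range f) (range f).mkQ_surjective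
  obtain ⟨y, rfl⟩ := (range f).mkQ.rTensor_surjective (A ⧸ m) (range f).mkQ_surjective x
  rw [(surjective_iff_eq_zero_of_exact hexact).mp (h m hm), zero_apply]

theorem LinearMap.exact_of_forall_isMaximal_exact_rTensor [Module.Finite A M₁]
    {d₀ : M₀ →ₗ[A] M₁} {d₁ : M₁ →ₗ[A] M₂} [Module.Projective A (range d₁)]
    (hd : d₁ ∘ₗ d₀ = 0)
    (h : ∀ m : Ideal A, m.IsMaximal → Function.Exact (d₀.rTensor (A ⧸ m)) (d₁.rTensor (A ⧸ m))) :
    Function.Exact d₀ d₁ := by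
  obtain ⟨r, hr⟩ := d₁.exists_leftInverse_ker_subtype
  have : Module.Finite A (ker d₁) := .of_surjective r (surjective_of_comp_eq_id _ _ hr)
  let d₀' : M₀ →ₗ[A] ker d₁ := d₀.codRestrict (ker d₁) fun x => congr($hd x)
  suffices hsurj : Function.Surjective d₀' by
    refine fun y => ⟨fun hy => ?_, ?_⟩
    · obtain ⟨x, hx⟩ := hsurj ⟨y, hy⟩
      exact ⟨x, congr(Subtype.val $hx)⟩
    · rintro ⟨x, rfl⟩
      exact (d₀' x).2
  refine d₀'.surjective_of_forall_isMaximal_surjective_rTensor fun m hm w => ?_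
  have hinj : Function.Injective ((ker d₁).subtype.rTensor (A ⧸ m)) :=
    injective_of_comp_eq_id ((ker d₁).subtype.rTensor (A ⧸ m)) (r.rTensor (A ⧸ m))
      (by rw [← rTensor_comp, hr, rTensor_id])
  have hcomp : d₁.rTensor (A ⧸ m) ∘ₗ (ker d₁).subtype.rTensor (A ⧸ m) = 0 := by
    rw [← rTensor_comp, comp_ker_subtype, rTensor_zero]
  obtain ⟨y, hy⟩ := (h m hm _).mp (LinearMap.congr_fun hcomp w)
  exact ⟨y, hinj (by rw [← hy, ← LinearMap.comp_apply, ← rTensor_comp]; rfl)⟩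

end CommRing

namespace CochainComplex

theorem quasiIso_iff_acyclic_mappingCone {C : Type*} [Category C] [Abelian C]
    {K L : CochainComplex C ℤ} (f : K ⟶ L) : QuasiIso f ↔ (mappingCone f).Acyclic := by
  rw [← HomologicalComplex.mem_quasiIso_iff, ← HomotopyCategory.quotient_map_mem_quasiIso_iff,
    HomotopyCategory.quasiIso_eq_trW_subcategoryAcyclic]
  exact ((HomotopyCategory.subcategoryAcyclic C).trW_iff_of_distinguished _
    (HomotopyCategory.mappingCone_triangleh_distinguished f)).trans
    (HomotopyCategory.quotient_obj_mem_subcategoryAcyclic_iff_acyclic _)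

noncomputable def mappingCone.XLinearEquiv {R : Type u} [Ring R]
    {C D : CochainComplex (ModuleCat.{u} R) ℤ} (φ : C ⟶ D) (n : ℤ) :
    (mappingCone φ).X n ≃ₗ[R] C.X (n + 1) × D.X n :=
  ((HomologicalComplex.homotopyCofiber.XIsoBiprod φ n (n + 1) rfl).trans
    (ModuleCat.biprodIsoProd _ _)).toLinearEquiv

theorem exactAt_iff_function_exact {R : Type*} [Ring R]
    (K : CochainComplex (ModuleCat R) ℤ) {i j k : ℤ} (hij : i + 1 = j) (hjk : j + 1 = k) :
    K.ExactAt j ↔ Function.Exact (K.d i j).hom (K.d j k).hom := by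
  rw [HomologicalComplex.exactAt_iff' K i j k (by simp; omega) (by simp; omega),
    ShortComplex.ShortExact.moduleCat_exact_iff_function_exact]
  rfl

open MonoidalCategory in
theorem acyclic_of_forall_isMaximal_acyclic_tensorRight {A : Type u} [CommRing A]
    (K : CochainComplex (ModuleCat.{u} A) ℤ) (hproj : ∀ n, Module.Projective A (K.X n))
    (hfin : ∀ n, Module.Finite A (K.X n)) {b : ℤ} (hb : ∀ n, b < n → IsZero (K.X n))
    (htens : ∀ m : Ideal A, m.IsMaximal →
      (((tensorRight (ModuleCat.of A (A ⧸ m))).mapHomologicalComplex (ComplexShape.up ℤ)).obj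
        K).Acyclic) :
    K.Acyclic := by
  have hexact (n : ℤ) [Module.Projective A (LinearMap.range (K.d n (n + 1)).hom)] :
      Function.Exact (K.d (n - 1) n).hom (K.d n (n + 1)).hom :=
    have := hfin n
    LinearMap.exact_of_forall_isMaximal_exact_rTensor
      congr(ModuleCat.Hom.hom $(K.d_comp_d (n - 1) n (n + 1)))
      fun m hm => (exactAt_iff_function_exact _ (by omega) rfl).mp (htens m hm n)
  have hrange_of_le (n : ℤ) (hn : b ≤ n) :
      Module.Projective A (LinearMap.range (K.d n (n + 1)).hom) :=
    have := ModuleCat.subsingleton_of_isZero (hb (n + 1) (by omega))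
    inferInstance
  have hrange (n : ℤ) : Module.Projective A (LinearMap.range (K.d n (n + 1)).hom) := by
    induction n using Int.inductionOn' (b := b) with
    | zero => exact hrange_of_le b le_rfl
    | succ k hk _ => exact hrange_of_le (k + 1) (by omega)
    | pred k _ ih =>
      have := hproj k
      rw [sub_add_cancel, ← (hexact k).linearMap_ker_eq]
      exact .ker_of_projective_range _
  exact fun n => (exactAt_iff_function_exact K (by omega) rfl).mpr (hexact n)

end CochainComplex

open CochainComplex in
theorem quasiIso_of_quasiIso_mod_maximal_general (A : Type u) [CommRing A]
    (C D : CochainComplex (ModuleCat.{u} A) ℤ) (φ : C ⟶ D)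
    (hCproj : ∀ n : ℤ, Projective (C.X n)) (hDproj : ∀ n : ℤ, Projective (D.X n))
    (hCfin : ∀ n : ℤ, Module.Finite A (C.X n)) (hDfin : ∀ n : ℤ, Module.Finite A (D.X n))
    (hCbdd : ∃ a b : ℤ, ∀ n : ℤ, (n < a ∨ b < n) → IsZero (C.X n))
    (hDbdd : ∃ a b : ℤ, ∀ n : ℤ, (n < a ∨ b < n) → IsZero (D.X n))
    (hmod : ∀ (m : Ideal A), m.IsMaximal →
      QuasiIso ((Functor.mapHomologicalComplex
        (MonoidalCategory.tensorRight (ModuleCat.of A (A ⧸ m))) (ComplexShape.up ℤ)).map φ)) :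
    QuasiIso φ := by
  obtain ⟨_, bC, hC⟩ := hCbdd
  obtain ⟨_, bD, hD⟩ := hDbdd
  rw [quasiIso_iff_acyclic_mappingCone]
  refine (mappingCone φ).acyclic_of_forall_isMaximal_acyclic_tensorRight (b := max bC bD)
    (fun n => ?projective) (fun n => ?finite) (fun n hn => ?bounded) (fun m hm => ?reduction)
  case projective =>
    have := (IsProjective.iff_projective _).mpr (hCproj (n + 1))
    have := (IsProjective.iff_projective _).mpr (hDproj n)
    exact .of_equiv (mappingCone.XLinearEquiv φ n).symm
  case finite =>
    have := hCfin (n + 1)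
    have := hDfin n
    exact .equiv (mappingCone.XLinearEquiv φ n).symm
  case bounded =>
    exact (mappingCone.isZero_X_iff φ n).mpr
      ⟨hC (n + 1) (Or.inr (by omega)), hD n (Or.inr (by omega))⟩
  case reduction =>
    exact fun n => ((quasiIso_iff_acyclic_mappingCone _).mp (hmod m hm) n).of_iso
      (mappingCone.mapHomologicalComplexIso φ _).symm

/-- Let `A` be a commutative Noetherian ring and `φ : C• → D•` a morphism of
bounded complexes of finitely generated projective `A`-modules. If for every maximal ideal `m`
of `A` the induced morphism `C• ⊗_A A/m → D• ⊗_A A/m` is a quasi-isomorphism, and all homology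
modules of the mapping cone of `φ` are finitely generated, then `φ` is a quasi-isomorphism. -/
theorem quasiIso_of_quasiIso_mod_maximal (A : Type u) [CommRing A] [IsNoetherianRing A]
    (C D : CochainComplex (ModuleCat.{u} A) ℤ) (φ : C ⟶ D)
    (hCproj : ∀ n : ℤ, Projective (C.X n)) (hDproj : ∀ n : ℤ, Projective (D.X n))
    (hCfin : ∀ n : ℤ, Module.Finite A (C.X n)) (hDfin : ∀ n : ℤ, Module.Finite A (D.X n))
    (hCbdd : ∃ a b : ℤ, ∀ n : ℤ, (n < a ∨ b < n) → IsZero (C.X n))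
    (hDbdd : ∃ a b : ℤ, ∀ n : ℤ, (n < a ∨ b < n) → IsZero (D.X n))
    (hcone : ∀ n : ℤ, Module.Finite A ((CochainComplex.mappingCone φ).homology n))
    (hmod : ∀ (m : Ideal A), m.IsMaximal →
      QuasiIso ((Functor.mapHomologicalComplex
        (MonoidalCategory.tensorRight (ModuleCat.of A (A ⧸ m))) (ComplexShape.up ℤ)).map φ)) :
    QuasiIso φ :=
  quasiIso_of_quasiIso_mod_maximal_general A C D φ hCproj hDproj hCfin hDfin hCbdd hDbdd hmod
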